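/- arXiv:2106.03440 — 2 statements merged into one kernel-verified Lean document; each statement's English description precedes it below -/
import Mathlib

section
/- Let n ≥ 1 and 1 ≤ k' ≤ k ≤ n, and let Φ(k,k') be the sum of all monomials of degree k in x_1,...,x_{n-k'+1}. Then in the quotient ring Z[x_1,...,x_n]/⟨h_1,...,h_n⟩, where h_i are the complete homogeneous symmetric polynomials in n variables, the image of Φ(k,k') is zero. -/
/-- Sum of all monomials of degree `a` in the first `b` variables `x_1, …, x_b`
of `R[x_1, …, x_n]`. -/
noncomputable def Hp (R : Type*) [CommRing R] (n a b : ℕ) : MvPolynomial (Fin n) R :=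
  ∑ m ∈ (Finset.univ.filter fun i : Fin n => (i : ℕ) < b).sym a,
    ((m : Multiset (Fin n)).map MvPolynomial.X).prod

/-- `Φ(k, k')`: the sum of all monomials of degree `k` in the variables
`x_1, …, x_{n-k'+1}`. In particular `h_k = Φ(k, 1)`. -/
noncomputable def Phi (R : Type*) [CommRing R] (n k k' : ℕ) : MvPolynomial (Fin n) R :=
  Hp R n k (n - k' + 1)

/-!
Adjoining the variable `x_{b+1}` splits the monomials of degree `k+1` in `x_1, …, x_{b+1}`
into those not involving `x_{b+1}` and `x_{b+1}` times all monomials of degree `k`, so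
`Hp (k+1) b = Hp (k+1) (b+1) - x_{b+1} Hp k (b+1)`. Since `Phi k k' = Hp k (n-k'+1)`, this reads
`Φ(k, k'+1) = Φ(k, k') - x_{n-k'+1} Φ(k-1, k')`, and induction on `k'` starting from
`Φ(l, 1) = h_l` puts every `Φ(k, k')` with `k' ≤ k ≤ n` into the ideal `⟨h_1, …, h_n⟩`.
-/

open MvPolynomial Finset

namespace Finset

variable {α : Type*} [DecidableEq α] {a : α} {s : Finset α} {k : ℕ}

theorem filter_notMem_sym_insert (ha : a ∉ s) :
    ((insert a s).sym k).filter (fun m => a ∉ m) = s.sym k := by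
  ext m
  simp only [mem_filter, mem_sym_iff, mem_insert]
  refine ⟨fun ⟨hm, ham⟩ b hb => (hm b hb).resolve_left (by rintro rfl; exact ham hb),
    fun hm => ⟨fun b hb => Or.inr (hm b hb), fun ham => ha (hm a ham)⟩⟩

theorem filter_mem_sym_insert_succ :
    ((insert a s).sym (k + 1)).filter (fun m => a ∈ m) = ((insert a s).sym k).image (Sym.cons a) := by
  ext m
  simp only [mem_filter, mem_image, mem_sym_iff]
  constructor
  · rintro ⟨hm, ham⟩
    refine ⟨m.erase a ham, fun b hb => hm b (Multiset.mem_of_mem_erase hb), Sym.cons_erase ham⟩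
  · rintro ⟨m, hm, rfl⟩
    refine ⟨fun b hb => ?_, Sym.mem_cons_self a m⟩
    rcases Sym.mem_cons.mp hb with rfl | hb
    exacts [mem_insert_self b s, hm b hb]

theorem sum_sym_insert_succ_prod_map {R : Type*} [CommSemiring R] (f : α → R) (ha : a ∉ s) :
    ∑ m ∈ (insert a s).sym (k + 1), ((m : Multiset α).map f).prod
      = ∑ m ∈ s.sym (k + 1), ((m : Multiset α).map f).prod
        + f a * ∑ m ∈ (insert a s).sym k, ((m : Multiset α).map f).prod := by
  rw [← sum_filter_not_add_sum_filter _ (fun m => a ∈ m), filter_notMem_sym_insert ha,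
    filter_mem_sym_insert_succ, sum_image fun _ _ _ _ h => (Sym.cons_inj_right a _ _).mp h,
    mul_sum]
  simp only [Sym.coe_cons, Multiset.map_cons, Multiset.prod_cons]

end Finset

theorem Hp_succ_succ (R : Type*) [CommRing R] {n : ℕ} (k b : ℕ) (hb : b < n) :
    Hp R n (k + 1) (b + 1) = Hp R n (k + 1) b + X ⟨b, hb⟩ * Hp R n k (b + 1) := by
  have hinsert : (univ.filter fun i : Fin n => (i : ℕ) < b + 1)
      = insert ⟨b, hb⟩ (univ.filter fun i : Fin n => (i : ℕ) < b) := by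
    ext i
    simp only [mem_filter, mem_insert, mem_univ, true_and, Fin.ext_iff]
    omega
  unfold Hp
  rw [hinsert, sum_sym_insert_succ_prod_map _ (by simp)]

theorem Phi_mem_span_Phi_one (R : Type*) [CommRing R] {n k k' : ℕ} (hk' : 1 ≤ k')
    (hk'k : k' ≤ k) (hk : k ≤ n) :
    Phi R n k k' ∈ Ideal.span { p | ∃ l, 1 ≤ l ∧ l ≤ n ∧ p = Phi R n l 1 } := by
  induction k', hk' using Nat.le_induction generalizing k with
  | base => exact Ideal.subset_span ⟨k, hk'k, hk, rfl⟩
  | succ j hj ih =>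
    obtain ⟨m, rfl⟩ : ∃ m, k = m + 1 := ⟨k - 1, by omega⟩
    have hb : n - (j + 1) + 1 < n := by omega
    have hstep : Phi R n (m + 1) (j + 1)
        = Phi R n (m + 1) j - X ⟨n - (j + 1) + 1, hb⟩ * Phi R n m j := by
      rw [Phi, Phi, Phi, show n - j + 1 = n - (j + 1) + 1 + 1 by omega, Hp_succ_succ R m _ hb]
      ring
    rw [hstep]
    exact sub_mem (ih (by omega) hk) (Ideal.mul_mem_left _ _ (ih (by omega) (by omega)))

theorem stmt5_general (n k k' : ℕ) (hk' : 1 ≤ k') (hk'k : k' ≤ k) (hk : k ≤ n) :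
    Ideal.Quotient.mk
        (Ideal.span { p : MvPolynomial (Fin n) ℤ | ∃ l, 1 ≤ l ∧ l ≤ n ∧ p = Phi ℤ n l 1 })
        (Phi ℤ n k k') = 0 :=
  Ideal.Quotient.eq_zero_iff_mem.mpr (Phi_mem_span_Phi_one ℤ hk' hk'k hk)

theorem stmt5 (n k k' : ℕ) (hn : 1 ≤ n) (hk' : 1 ≤ k') (hk'k : k' ≤ k) (hk : k ≤ n) :
    Ideal.Quotient.mk
        (Ideal.span { p : MvPolynomial (Fin n) ℤ | ∃ l, 1 ≤ l ∧ l ≤ n ∧ p = Phi ℤ n l 1 })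
        (Phi ℤ n k k') = 0 :=
  stmt5_general n k k' hk' hk'k hk
end

section
/- For n ≥ 1 and 1 ≤ c, the single-variable instance of the key cancellation: Σ over tuples (a_1,...,a_c) of non-negative integers with a_1+...+a_c = c-1, satisfying a_{k-1}=0 ⟹ a_k=0 for 2 ≤ k ≤ c, of (-1)^{1+L(a)} · c!/(a_1!···a_c!) equals c·(-1)^c, where L(a) is the number of non-zero entries. -/
/-!
Tuples of length `c` summing to `n` whose zeros all come last are the compositions of `n` into
at most `c` parts, padded with zeros. Let `F c n` be the sum of `(-1)^L(a) n!/(a₁!⋯a_c!)` over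
them. Splitting off the first part `k ≥ 1` gives `F (c+1) n = -∑_{k=1}^n C(n,k) F c (n-k)` for
`n ≠ 0`, and `F c 0 = 1`; by the binomial expansion of `(1 - 1)^n`, `(-1)^n` satisfies the same
recursion, so `F c n = (-1)^n` whenever `n ≤ c` (so that no composition is cut off). The theorem
is the case `n = c - 1`, after writing `c!/∏ aᵢ! = c · (c-1)!/∏ aᵢ!`.
-/

open Finset

theorem Nat.multinomial_univ_finCons {d : ℕ} (k : ℕ) (t : Fin d → ℕ) :
    Nat.multinomial univ (Fin.cons k t : Fin (d + 1) → ℕ)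
      = (k + ∑ i, t i).choose k * Nat.multinomial univ t := by
  rw [Nat.multinomial, Nat.div_eq_iff_eq_mul_left (by positivity)
    (Nat.prod_factorial_dvd_factorial_sum _ _)]
  simp only [Fin.sum_univ_succ, Fin.prod_univ_succ, Fin.cons_zero, Fin.cons_succ]
  rw [mul_assoc, mul_left_comm _ k.factorial, mul_comm (Nat.multinomial _ _), Nat.multinomial_spec,
    ← mul_assoc, Nat.choose_symm_add, Nat.add_choose_mul_factorial_mul_factorial]

theorem Nat.factorial_succ_sum_div_prod_factorial {α : Type*} (s : Finset α) (f : α → ℕ) :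
    (∑ i ∈ s, f i + 1).factorial / ∏ i ∈ s, (f i).factorial
      = (∑ i ∈ s, f i + 1) * Nat.multinomial s f := by
  rw [Nat.factorial_succ, Nat.mul_div_assoc _ (Nat.prod_factorial_dvd_factorial_sum s f)]
  rfl

theorem Int.sum_Icc_one_neg_one_pow_mul_choose {n : ℕ} (hn : n ≠ 0) :
    ∑ k ∈ Icc 1 n, (-1) ^ (n - k) * (n.choose k : ℤ) = -(-1) ^ n := by
  have h := add_pow (1 : ℤ) (-1) n
  rw [add_neg_cancel, zero_pow hn, range_eq_Ico, sum_eq_sum_Ico_succ_bot (by omega),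
    Ico_add_one_right_eq_Icc] at h
  simp only [zero_add, one_pow, one_mul, Nat.sub_zero, Nat.choose_zero_right, Nat.cast_one,
    mul_one] at h
  linarith

theorem card_filter_cons_ne_zero {d k : ℕ} (hk : k ≠ 0) (t : Fin d → ℕ) :
    #{i | (Fin.cons k t : Fin (d + 1) → ℕ) i ≠ 0} = #{i | t i ≠ 0} + 1 := by
  rw [card_filter, card_filter, Fin.sum_univ_succ]
  simp [hk, add_comm]

def ZerosAtEnd {c : ℕ} (a : Fin c → ℕ) : Prop :=
  ∀ k : Fin c, ∀ h : (k : ℕ) + 1 < c, a k = 0 → a ⟨(k : ℕ) + 1, h⟩ = 0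

theorem ZerosAtEnd.eq_zero_of_head_eq_zero {d : ℕ} {a : Fin (d + 1) → ℕ}
    (ha : ZerosAtEnd a) (h0 : a 0 = 0) : a = 0 := by
  funext ⟨j, hj⟩
  induction j with
  | zero => exact h0
  | succ j ih => exact ha ⟨j, by omega⟩ hj (ih (by omega))

theorem zerosAtEnd_cons_iff {d k : ℕ} (hk : k ≠ 0) (t : Fin d → ℕ) :
    ZerosAtEnd (Fin.cons k t : Fin (d + 1) → ℕ) ↔ ZerosAtEnd t := by
  unfold ZerosAtEnd
  rw [Fin.forall_fin_succ]
  simp only [Fin.cons_zero, hk, IsEmpty.forall_iff, implies_true, true_and, Fin.val_succ,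
    Fin.cons_succ]
  exact forall_congr' fun j => ⟨fun h hj => h (by omega), fun h hj => h (by omega)⟩

def paddedCompositions (c n : ℕ) : Finset (Fin c → ℕ) :=
  (Finset.Nat.antidiagonalTuple c n).filter
    (fun a => ∀ k : Fin c, ∀ h : (k : ℕ) + 1 < c, a k = 0 → a ⟨(k : ℕ) + 1, h⟩ = 0)

theorem mem_paddedCompositions {c n : ℕ} {a : Fin c → ℕ} :
    a ∈ paddedCompositions c n ↔ ∑ i, a i = n ∧ ZerosAtEnd a := by
  rw [paddedCompositions, mem_filter, Finset.Nat.mem_antidiagonalTuple, ZerosAtEnd]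

theorem paddedCompositions_zero_right (c : ℕ) : paddedCompositions c 0 = {0} := by
  rw [paddedCompositions, Finset.Nat.antidiagonalTuple_zero_right, filter_singleton, if_pos]
  exact fun _ _ _ => rfl

theorem cons_mem_paddedCompositions_iff {d k n : ℕ} (hk : k ≠ 0) (t : Fin d → ℕ) :
    Fin.cons k t ∈ paddedCompositions (d + 1) n ↔ k ≤ n ∧ t ∈ paddedCompositions d (n - k) := by
  simp only [mem_paddedCompositions, zerosAtEnd_cons_iff hk, Fin.sum_univ_succ,
    Fin.cons_zero, Fin.cons_succ]
  exact ⟨fun ⟨hsum, ht⟩ => ⟨by omega, by omega, ht⟩, fun ⟨hkn, hsum, ht⟩ => ⟨by omega, ht⟩⟩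

theorem sum_paddedCompositions_succ {M : Type*} [AddCommMonoid M] {d n : ℕ} (hn : n ≠ 0)
    (f : (Fin (d + 1) → ℕ) → M) :
    ∑ a ∈ paddedCompositions (d + 1) n, f a
      = ∑ k ∈ Icc 1 n, ∑ t ∈ paddedCompositions d (n - k), f (Fin.cons k t) := by
  rw [sum_sigma']
  refine sum_nbij' (fun a => ⟨a 0, Fin.tail a⟩) (fun x => Fin.cons x.1 x.2) ?_ ?_
    (fun a _ => Fin.cons_self_tail a) (fun x _ => by simp) (fun a _ => by rw [Fin.cons_self_tail])
  · intro a ha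
    have h0 : a 0 ≠ 0 := fun h0 => by
      obtain ⟨hsum, hzero⟩ := mem_paddedCompositions.1 ha
      simp [hzero.eq_zero_of_head_eq_zero h0, eq_comm, hn] at hsum
    rw [← Fin.cons_self_tail a, cons_mem_paddedCompositions_iff h0] at ha
    exact mem_sigma.2 ⟨mem_Icc.2 ⟨Nat.one_le_iff_ne_zero.2 h0, ha.1⟩, ha.2⟩
  · rintro ⟨k, t⟩ hkt
    rw [mem_sigma, mem_Icc] at hkt
    exact (cons_mem_paddedCompositions_iff (by omega) t).2 ⟨hkt.1.2, hkt.2⟩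

def alternatingMultinomialSum (c n : ℕ) : ℤ :=
  ∑ a ∈ paddedCompositions c n, (-1) ^ #{i | a i ≠ 0} * (Nat.multinomial univ a : ℤ)

theorem alternatingMultinomialSum_zero_right (c : ℕ) : alternatingMultinomialSum c 0 = 1 := by
  simp [alternatingMultinomialSum, paddedCompositions_zero_right, Nat.multinomial]

theorem alternatingMultinomialSum_succ {d n : ℕ} (hn : n ≠ 0) :
    alternatingMultinomialSum (d + 1) n
      = -∑ k ∈ Icc 1 n, n.choose k * alternatingMultinomialSum d (n - k) := by
  rw [alternatingMultinomialSum, sum_paddedCompositions_succ hn, ← sum_neg_distrib]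
  refine sum_congr rfl fun k hk => ?_
  rw [alternatingMultinomialSum, mul_sum, ← sum_neg_distrib]
  refine sum_congr rfl fun t ht => ?_
  obtain ⟨hk1, hkn⟩ := mem_Icc.1 hk
  have hsum : k + ∑ i, t i = n := by rw [(mem_paddedCompositions.1 ht).1]; omega
  rw [card_filter_cons_ne_zero (by omega), Nat.multinomial_univ_finCons, hsum, pow_succ]
  push_cast
  ring

theorem alternatingMultinomialSum_of_le {c n : ℕ} (h : n ≤ c) :
    alternatingMultinomialSum c n = (-1) ^ n := by
  induction c generalizing n with
  | zero => rw [Nat.le_zero.1 h, alternatingMultinomialSum_zero_right, pow_zero]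
  | succ d ih =>
    rcases eq_or_ne n 0 with rfl | hn
    · rw [alternatingMultinomialSum_zero_right, pow_zero]
    rw [alternatingMultinomialSum_succ hn, sum_congr rfl fun k hk => by
      rw [ih (by rw [mem_Icc] at hk; omega), mul_comm], Int.sum_Icc_one_neg_one_pow_mul_choose hn, neg_neg]

theorem stmt18 (c : ℕ) (hc : 1 ≤ c) :
    ∑ a ∈ (Finset.Nat.antidiagonalTuple c (c - 1)).filter
        (fun a => ∀ k : Fin c, ∀ h : (k : ℕ) + 1 < c, a k = 0 → a ⟨(k : ℕ) + 1, h⟩ = 0),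
      (-1 : ℤ) ^ (1 + (Finset.univ.filter fun i : Fin c => a i ≠ 0).card) *
        ((c.factorial / ∏ i : Fin c, (a i).factorial : ℕ) : ℤ)
      = (c : ℤ) * (-1 : ℤ) ^ c := by
  obtain ⟨n, rfl⟩ := Nat.exists_eq_add_of_le' hc
  have hsummand : ∀ a ∈ paddedCompositions (n + 1) n,
      (-1 : ℤ) ^ (1 + #{i | a i ≠ 0}) * (((n + 1).factorial / ∏ i, (a i).factorial : ℕ) : ℤ)
        = -(n + 1 : ℤ) * ((-1) ^ #{i | a i ≠ 0} * (Nat.multinomial univ a : ℤ)) := by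
    intro a ha
    have h := Nat.factorial_succ_sum_div_prod_factorial univ a
    rw [(mem_paddedCompositions.1 ha).1] at h
    rw [h, pow_add]
    push_cast
    ring
  rw [Nat.add_sub_cancel, ← paddedCompositions, sum_congr rfl hsummand, ← mul_sum,
    ← alternatingMultinomialSum, alternatingMultinomialSum_of_le n.le_succ]
  push_cast
  ring
end
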